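/- arXiv:1710.10402 — 11 statements merged into one kernel-verified Lean document; each statement's English description precedes it below -/
import Mathlib

section
/- In a convex algebra X, an element x adheres to y (i.e., px + (1-p)y = y for all p in (0,1)) if and only if px + (1-p)y = y for some p in (0,1). -/
/-- A convex algebra presented via binary convex combinations (Stone axioms).
`comb p x y` stands for `p x + (1-p) y`. -/
structure ConvexAlg (X : Type*) where
  comb : ℝ → X → X → X
  idem : ∀ p ∈ Set.Ioo (0:ℝ) 1, ∀ x, comb p x x = x
  comm : ∀ p ∈ Set.Ioo (0:ℝ) 1, ∀ x y, comb p x y = comb (1-p) y x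
  assoc : ∀ p ∈ Set.Ioo (0:ℝ) 1, ∀ q ∈ Set.Ioo (0:ℝ) 1, ∀ x y z,
    comb p (comb q x y) z = comb (p*q) x (comb (p*(1-q)/(1-p*q)) y z)

/-- `x` adheres to `y` : `p x + (1-p) y = y` for all `p ∈ (0,1)`. -/
def ConvexAlg.Adh {X : Type*} (A : ConvexAlg X) (x y : X) : Prop :=
  ∀ p ∈ Set.Ioo (0:ℝ) 1, A.comb p x y = y

lemma ConvexAlg.scale {X : Type*} (A : ConvexAlg X) {x y : X} {a q : ℝ}
    (ha : a ∈ Set.Ioo (0:ℝ) 1) (hq : q ∈ Set.Ioo (0:ℝ) 1)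
    (h : A.comb q x y = y) : A.comb (a*q) x y = y := by
  obtain ⟨ha0, ha1⟩ := ha
  obtain ⟨hq0, hq1⟩ := hq
  have haq : a*q ∈ Set.Ioo (0:ℝ) 1 := ⟨by positivity, by nlinarith⟩
  have hr : a*(1-q)/(1-a*q) ∈ Set.Ioo (0:ℝ) 1 := by
    constructor
    · apply div_pos (by nlinarith) (by nlinarith)
    · rw [div_lt_one (by nlinarith)]; nlinarith
  have key := A.assoc a ⟨ha0, ha1⟩ q ⟨hq0, hq1⟩ x y y
  rw [h, A.idem a ⟨ha0, ha1⟩ y, A.idem _ hr y] at key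
  exact key.symm

lemma ConvexAlg.merge {X : Type*} (A : ConvexAlg X) (x y : X) {a b : ℝ}
    (ha : a ∈ Set.Ioo (0:ℝ) 1) (hb : b ∈ Set.Ioo (0:ℝ) 1) :
    A.comb a x (A.comb b x y) = A.comb (1-(1-a)*(1-b)) x y := by
  obtain ⟨ha0, ha1⟩ := ha
  obtain ⟨hb0, hb1⟩ := hb
  have ha' : (1-a) ∈ Set.Ioo (0:ℝ) 1 := ⟨by linarith, by linarith⟩
  have hb' : (1-b) ∈ Set.Ioo (0:ℝ) 1 := ⟨by linarith, by linarith⟩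
  have hab : (1-a)*(1-b) ∈ Set.Ioo (0:ℝ) 1 := ⟨by nlinarith, by nlinarith⟩
  have hr : (1-a)*(1-(1-b))/(1-(1-a)*(1-b)) ∈ Set.Ioo (0:ℝ) 1 := by
    constructor
    · apply div_pos (by nlinarith) (by nlinarith)
    · rw [div_lt_one (by nlinarith)]; nlinarith
  calc A.comb a x (A.comb b x y)
      = A.comb (1-a) (A.comb b x y) x := A.comm a ⟨ha0, ha1⟩ _ _
    _ = A.comb (1-a) (A.comb (1-b) y x) x := by rw [A.comm b ⟨hb0, hb1⟩ x y]
    _ = A.comb ((1-a)*(1-b)) y (A.comb ((1-a)*(1-(1-b))/(1-(1-a)*(1-b))) x x) :=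
        A.assoc (1-a) ha' (1-b) hb' y x x
    _ = A.comb ((1-a)*(1-b)) y x := by rw [A.idem _ hr x]
    _ = A.comb (1-(1-a)*(1-b)) x y := A.comm _ hab y x

lemma ConvexAlg.pow_mem {X : Type*} (A : ConvexAlg X) {x y : X} {p : ℝ}
    (hp : p ∈ Set.Ioo (0:ℝ) 1) (h : A.comb p x y = y) :
    ∀ n : ℕ, A.comb (1-(1-p)^(n+1)) x y = y := by
  obtain ⟨hp0, hp1⟩ := hp
  intro n
  induction n with
  | zero => simpa using h
  | succ n ih =>
    have hb : 1-(1-p)^(n+1) ∈ Set.Ioo (0:ℝ) 1 := by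
      have h1 : (1-p)^(n+1) < 1 := pow_lt_one₀ (by linarith) (by linarith) (Nat.succ_ne_zero n)
      have h2 : (0:ℝ) < (1-p)^(n+1) := pow_pos (by linarith) _
      exact ⟨by linarith, by linarith⟩
    have := A.merge x y ⟨hp0, hp1⟩ hb
    rw [ih, h] at this
    have heq : 1-(1-p)*(1-(1-(1-p)^(n+1))) = 1-(1-p)^(n+2) := by ring
    rw [heq] at this
    exact this.symm

/-- `x` adheres to `y` iff `p x + (1-p) y = y` for some `p ∈ (0,1)`. -/
theorem adh_iff_exists {X : Type*} (A : ConvexAlg X) (x y : X) :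
    A.Adh x y ↔ ∃ p ∈ Set.Ioo (0:ℝ) 1, A.comb p x y = y := by
  constructor
  · intro h
    exact ⟨1/2, by norm_num, h _ (by norm_num)⟩
  · rintro ⟨p, hp, hpy⟩
    intro t ht
    obtain ⟨hp0, hp1⟩ := hp
    obtain ⟨ht0, ht1⟩ := ht
    obtain ⟨n, hn⟩ := exists_pow_lt_of_lt_one (show (0:ℝ) < 1-t by linarith)
      (show 1-p < 1 by linarith)
    -- q := 1-(1-p)^(n+1) satisfies t < q and comb q x y = y
    have hq : A.comb (1-(1-p)^(n+1)) x y = y := A.pow_mem ⟨hp0, hp1⟩ hpy n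
    set q := 1-(1-p)^(n+1) with hqdef
    have hpow : (1-p)^(n+1) ≤ (1-p)^n := pow_le_pow_of_le_one (by linarith) (by linarith) (Nat.le_succ n)
    have hq1 : q < 1 := by
      have := pow_pos (show (0:ℝ) < 1-p by linarith) (n+1); simp [hqdef]; linarith
    have htq : t < q := by simp only [hqdef]; linarith
    have hq0 : 0 < q := lt_trans ht0 htq
    have ha : t/q ∈ Set.Ioo (0:ℝ) 1 := ⟨div_pos ht0 hq0, (div_lt_one hq0).mpr htq⟩
    have := A.scale ha ⟨hq0, hq1⟩ hq
    rwa [div_mul_cancel₀ t (ne_of_gt hq0)] at this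
end

section
/- In a convex algebra X, the adherence relation is reflexive and convex: if x adheres to y and u adheres to v, then for every q in (0,1), qx + (1-q)u adheres to qy + (1-q)v. -/
/-- adherence is reflexive and convex. -/
theorem adh_refl_and_convex {X : Type*} (A : ConvexAlg X) :
    (∀ x : X, A.Adh x x) ∧
    (∀ x y u v : X, A.Adh x y → A.Adh u v →
      ∀ q ∈ Set.Ioo (0:ℝ) 1, A.Adh (A.comb q x u) (A.comb q y v)) := by
  constructor
  · intro x p hp
    exact A.idem p hp x
  · intro x y u v hx hu q hq p hp
    obtain ⟨hq0, hq1⟩ := hq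
    obtain ⟨hp0, hp1⟩ := hp
    have h1pq : (0:ℝ) < 1 - p*q := by nlinarith
    have hpq : p*q ∈ Set.Ioo (0:ℝ) 1 := ⟨by positivity, by nlinarith⟩
    set r : ℝ := p*(1-q)/(1-p*q) with hrdef
    have hr0 : 0 < r := by
      apply div_pos; nlinarith; exact h1pq
    have hr1 : r < 1 := by
      rw [div_lt_one h1pq]; nlinarith
    have h1r : (1-r) ∈ Set.Ioo (0:ℝ) 1 := ⟨by linarith, by linarith⟩
    have hsd : (0:ℝ) < 1 - (1-r)*q := by nlinarith
    set s : ℝ := (1-r)*(1-q)/(1-(1-r)*q) with hsdef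
    have hs0 : 0 < s := by
      apply div_pos; nlinarith; exact hsd
    have hs1 : s < 1 := by
      rw [div_lt_one hsd]; nlinarith
    -- step 1: outer associativity
    have step1 := A.assoc p ⟨hp0, hp1⟩ q ⟨hq0, hq1⟩ x u (A.comb q y v)
    -- step 2: commute inner
    have step2 := A.comm r ⟨hr0, hr1⟩ u (A.comb q y v)
    -- step 3: associativity on (1-r)
    have step3 := A.assoc (1-r) h1r q ⟨hq0, hq1⟩ y v u
    -- step 4: innermost collapses via Adh u v
    have step4 : A.comb s v u = v := by
      rw [A.comm s ⟨hs0, hs1⟩ v u]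
      exact hu (1-s) ⟨by linarith, by linarith⟩
    -- step 5: recombine via Adh x y
    have step5 := A.assoc q ⟨hq0, hq1⟩ p ⟨hp0, hp1⟩ x y v
    have hxy : A.comb p x y = y := hx p ⟨hp0, hp1⟩
    have hcoef1 : q*p = p*q := mul_comm q p
    have hne : (1 - p*q) ≠ 0 := ne_of_gt h1pq
    have h1r' : 1 - r = (1-p)/(1-p*q) := by
      rw [hrdef]
      field_simp
      ring
    have hcoef2 : q*(1-p)/(1-p*q) = (1-r)*q := by
      rw [h1r', div_mul_eq_mul_div, div_eq_div_iff hne hne]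
      ring
    rw [hxy, hcoef1, hcoef2] at step5
    calc A.comb p (A.comb q x u) (A.comb q y v)
        = A.comb (p*q) x (A.comb r u (A.comb q y v)) := step1
      _ = A.comb (p*q) x (A.comb (1-r) (A.comb q y v) u) := by rw [step2]
      _ = A.comb (p*q) x (A.comb ((1-r)*q) y (A.comb s v u)) := by rw [step3]
      _ = A.comb (p*q) x (A.comb ((1-r)*q) y v) := by rw [step4]
      _ = A.comb q y v := step5.symm
end

section
/- Let X be a convex algebra and z an X-cancellable element. If pz + (1-p)x adheres to pz + (1-p)y for some p in (0,1), then x adheres to y. -/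
/-- `z` is cancellable: `p x + (1-p) z = p y + (1-p) z` implies `x = y`. -/
def ConvexAlg.Cancellable {X : Type*} (A : ConvexAlg X) (z : X) : Prop :=
  ∀ x y : X, ∀ p ∈ Set.Ioo (0:ℝ) 1, A.comb p x z = A.comb p y z → x = y

/-- Distributivity: `q (p z + (1-p) x) + (1-q)(p z + (1-p) y) = p z + (1-p)(q x + (1-q) y)`. -/
lemma ConvexAlg.distrib {X : Type*} (A : ConvexAlg X) (z x y : X)
    {p q : ℝ} (hp : p ∈ Set.Ioo (0:ℝ) 1) (hq : q ∈ Set.Ioo (0:ℝ) 1) :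
    A.comb q (A.comb p z x) (A.comb p z y) = A.comb p z (A.comb q x y) := by
  obtain ⟨hp0, hp1⟩ := hp
  obtain ⟨hq0, hq1⟩ := hq
  have hpI : p ∈ Set.Ioo (0:ℝ) 1 := ⟨hp0, hp1⟩
  have hqI : q ∈ Set.Ioo (0:ℝ) 1 := ⟨hq0, hq1⟩
  have hqpI : q * p ∈ Set.Ioo (0:ℝ) 1 := ⟨by positivity, by nlinarith⟩
  have hden : (0:ℝ) < 1 - q * p := by nlinarith
  set s : ℝ := q * (1 - p) / (1 - q * p) with hs
  have hsI : s ∈ Set.Ioo (0:ℝ) 1 := by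
    constructor
    · exact div_pos (by nlinarith) hden
    · rw [div_lt_one hden]; nlinarith
  have h1sI : 1 - s ∈ Set.Ioo (0:ℝ) 1 := ⟨by linarith [hsI.2], by linarith [hsI.1]⟩
  have h1s : 1 - s = (1 - q) / (1 - q * p) := by
    rw [hs, eq_div_iff (ne_of_gt hden)]
    field_simp
    ring
  set b : ℝ := (1 - s) * p with hb
  have hbI : b ∈ Set.Ioo (0:ℝ) 1 := by
    constructor
    · exact mul_pos h1sI.1 hp0
    · nlinarith [h1sI.2]
  have h1b : 1 - b = (1 - p) / (1 - q * p) := by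
    rw [hb, h1s, eq_div_iff (ne_of_gt hden)]
    field_simp
    ring
  have hu : (1 - s) * (1 - p) / (1 - (1 - s) * p) = 1 - q := by
    have hbne : 1 - (1 - s) * p ≠ 0 := by rw [← hb]; linarith [hbI.2]
    rw [div_eq_iff hbne, ← hb, h1b, h1s]
    field_simp
  have hw : (1 - q * p) * (1 - b) = 1 - p := by
    rw [h1b]
    field_simp
  -- step 1: outer associativity
  have step1 := A.assoc q hqI p hpI z x (A.comb p z y)
  -- step 2: rearrange the inner term
  have step2 : A.comb s x (A.comb p z y) = A.comb b z (A.comb q x y) := by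
    rw [A.comm s hsI x (A.comb p z y), A.assoc (1 - s) h1sI p hpI z y x, hu, ← hb,
      ← A.comm q hqI x y]
  -- step 3: merge the two occurrences of z
  have h1qpI : 1 - q * p ∈ Set.Ioo (0:ℝ) 1 := ⟨by linarith [hqpI.2], by linarith [hqpI.1]⟩
  have h1bI : 1 - b ∈ Set.Ioo (0:ℝ) 1 := ⟨by linarith [hbI.2], by linarith [hbI.1]⟩
  have hcI : (1 - q * p) * (1 - (1 - b)) / (1 - (1 - q * p) * (1 - b)) ∈ Set.Ioo (0:ℝ) 1 := by
    rw [sub_sub_cancel, hw]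
    constructor
    · exact div_pos (mul_pos hden hbI.1) (by linarith)
    · rw [div_lt_one (by linarith)]
      nlinarith [hbI.1]
  have step3 : A.comb (q * p) z (A.comb b z (A.comb q x y)) = A.comb p z (A.comb q x y) := by
    rw [A.comm (q * p) hqpI z _, A.comm b hbI z _,
      A.assoc (1 - q * p) h1qpI (1 - b) h1bI (A.comb q x y) z z,
      A.idem _ hcI z, hw, ← A.comm p hpI z _]
  rw [step1, step2, step3]

/-- if `z` is cancellable and `p z + (1-p) x` adheres to `p z + (1-p) y`
for some `p ∈ (0,1)`, then `x` adheres to `y`. -/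
theorem adh_of_cancel {X : Type*} (A : ConvexAlg X) (z x y : X)
    (hz : A.Cancellable z)
    (h : ∃ p ∈ Set.Ioo (0:ℝ) 1, A.Adh (A.comb p z x) (A.comb p z y)) :
    A.Adh x y := by
  obtain ⟨p, hp, hadh⟩ := h
  intro q hq
  have key : A.comb p z (A.comb q x y) = A.comb p z y := by
    rw [← A.distrib z x y hp hq]
    exact hadh q hq
  have h1pI : 1 - p ∈ Set.Ioo (0:ℝ) 1 := ⟨by linarith [hp.2], by linarith [hp.1]⟩
  apply hz (A.comb q x y) y (1 - p) h1pI
  rw [← A.comm p hp z (A.comb q x y), ← A.comm p hp z y, key]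
end

section
/- Let X be a convex algebra, x an X-cancellable element. Then the singleton {x} is a Pc(X)-cancellable element of the convex algebra of nonempty convex subsets of X with Minkowski operations. -/
def ConvexAlg.IsConvexSet {X : Type*} (A : ConvexAlg X) (C : Set X) : Prop :=
  ∀ a ∈ C, ∀ b ∈ C, ∀ p ∈ Set.Ioo (0:ℝ) 1, A.comb p a b ∈ C

def ConvexAlg.mink {X : Type*} (A : ConvexAlg X) (p : ℝ) (B C : Set X) : Set X :=
  Set.image2 (A.comb p) B C

/-- if `x` is `X`-cancellable, then the singleton `{x}` is a cancellable
element of the convex algebra `Pc(X)` of nonempty convex subsets with Minkowski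
operations. -/
theorem singleton_cancellable {X : Type*} (A : ConvexAlg X) (x : X)
    (hx : A.Cancellable x) :
    ∀ B C : Set X, B.Nonempty → A.IsConvexSet B → C.Nonempty → A.IsConvexSet C →
      ∀ p ∈ Set.Ioo (0:ℝ) 1, A.mink p B {x} = A.mink p C {x} → B = C := by
  intro B C hB hBc hC hCc p hp h
  have key : ∀ B C : Set X, A.mink p B {x} = A.mink p C {x} → B ⊆ C := by
    intro B C h b hb
    have : A.comb p b x ∈ A.mink p C {x} := by
      rw [← h]; exact Set.mem_image2_of_mem hb rfl
    obtain ⟨c, hc, x', hx', he⟩ := this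
    rw [Set.mem_singleton_iff] at hx'
    subst hx'
    have : b = c := hx b c p hp he.symm
    exact this ▸ hc
  exact le_antisymm (key B C h) (key C B h.symm)
end

section
/- Let X_* be a one-point extension of a convex algebra X by a point * not in X. Then the set Pri(X_*) = {x in X : x does not adhere to *} is a prime ideal of X, i.e., it is an ideal and its complement in X is convex. -/
def ConvexAlg.IsIdeal {X : Type*} (A : ConvexAlg X) (P : Set X) : Prop :=
  ∀ x ∈ P, ∀ y : X, ∀ p ∈ Set.Ioo (0:ℝ) 1, A.comb p x y ∈ P

/-!
Adherence to `*` is witnessed by a single weight: if `r u + (1-r) v = v` for one `r ∈ (0,1)`, then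
the weights fixing `v` are closed under `a, b ↦ 1 - (1-a)(1-b)` and downward closed, so they
exhaust `(0,1)`. Convexity of the set of points adhering to `*` is then associativity. For the
ideal property, if `z = p x + (1-p) y` adheres to `*`, then `½ z + ½ * = (p/2) x + (1-p/2) w`
with `w = s y + (1-s) *` for some `s ∈ (0,1)`, and this can only be `*` if `w = *`, since `X` is closed under
combinations; hence `(p/2) x + (1-p/2) * = *` and `x` adheres to `*`.
-/

open Set

lemma mul_mem_Ioo_zero_one {p q : ℝ} (hp : p ∈ Ioo (0:ℝ) 1) (hq : q ∈ Ioo (0:ℝ) 1) :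
    p * q ∈ Ioo (0:ℝ) 1 :=
  ⟨mul_pos hp.1 hq.1, by nlinarith [hp.1, hp.2, hq.1, hq.2]⟩

lemma one_sub_mem_Ioo_zero_one {p : ℝ} (hp : p ∈ Ioo (0:ℝ) 1) : 1 - p ∈ Ioo (0:ℝ) 1 :=
  ⟨by linarith [hp.2], by linarith [hp.1]⟩

lemma one_sub_pow_succ_mem_Ioo_zero_one {r : ℝ} (hr : r ∈ Ioo (0:ℝ) 1) (n : ℕ) :
    1 - (1 - r) ^ (n + 1) ∈ Ioo (0:ℝ) 1 := by
  have h := one_sub_mem_Ioo_zero_one hr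
  exact one_sub_mem_Ioo_zero_one
    ⟨pow_pos h.1 _, pow_lt_one₀ h.1.le h.2 n.succ_ne_zero⟩

namespace ConvexAlg

variable {X : Type*} (A : ConvexAlg X)

lemma assoc_weight_mem_Ioo {p q : ℝ} (hp : p ∈ Ioo (0:ℝ) 1) (hq : q ∈ Ioo (0:ℝ) 1) :
    p * (1 - q) / (1 - p * q) ∈ Ioo (0:ℝ) 1 := by
  have hpos : (0:ℝ) < 1 - p * q := by nlinarith [hp.1, hp.2, hq.1, hq.2]
  exact ⟨div_pos (by nlinarith [hp.1, hq.2]) hpos, (div_lt_one hpos).2 (by nlinarith [hp.2, hq.1])⟩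

theorem comb_comb_self_right {p q : ℝ} (hp : p ∈ Ioo (0:ℝ) 1) (hq : q ∈ Ioo (0:ℝ) 1)
    (x y : X) : A.comb p (A.comb q x y) y = A.comb (p * q) x y := by
  rw [A.assoc p hp q hq, A.idem _ (assoc_weight_mem_Ioo hp hq)]

theorem comb_self_comb_right {a b : ℝ} (ha : a ∈ Ioo (0:ℝ) 1) (hb : b ∈ Ioo (0:ℝ) 1)
    (x z : X) : A.comb a x (A.comb b x z) = A.comb (1 - (1 - a) * (1 - b)) x z := by
  have ha' := one_sub_mem_Ioo_zero_one ha
  have hb' := one_sub_mem_Ioo_zero_one hb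
  rw [A.comm a ha, A.comm b hb, A.comb_comb_self_right ha' hb',
    A.comm _ (mul_mem_Ioo_zero_one ha' hb')]

variable {A}

theorem comb_eq_right_of_lt {u v : X} {q r : ℝ} (hq : q ∈ Ioo (0:ℝ) 1) (hr : r ∈ Ioo (0:ℝ) 1)
    (hqr : q < r) (h : A.comb r u v = v) : A.comb q u v = v := by
  have hqr' : q / r ∈ Ioo (0:ℝ) 1 := ⟨div_pos hq.1 hr.1, (div_lt_one hr.1).2 hqr⟩
  calc A.comb q u v = A.comb (q / r * r) u v := by rw [div_mul_cancel₀ q hr.1.ne']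
    _ = A.comb (q / r) (A.comb r u v) v := (A.comb_comb_self_right hqr' hr u v).symm
    _ = v := by rw [h, A.idem _ hqr']

theorem comb_one_sub_pow_succ_eq_right {u v : X} {r : ℝ} (hr : r ∈ Ioo (0:ℝ) 1)
    (h : A.comb r u v = v) (n : ℕ) : A.comb (1 - (1 - r) ^ (n + 1)) u v = v := by
  induction n with
  | zero => simpa using h
  | succ n ih =>
    have key := A.comb_self_comb_right hr (one_sub_pow_succ_mem_Ioo_zero_one hr n) u v
    rw [ih, h, sub_sub_cancel, ← pow_succ'] at key
    exact key.symm

theorem adh_of_comb_eq_right {u v : X} {r : ℝ} (hr : r ∈ Ioo (0:ℝ) 1)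
    (h : A.comb r u v = v) : A.Adh u v := by
  intro q hq
  obtain ⟨n, hn⟩ := exists_pow_lt_of_lt_one (sub_pos.2 hq.2) (sub_lt_self 1 hr.1)
  have hmono : (1 - r) ^ (n + 1) ≤ (1 - r) ^ n :=
    pow_le_pow_of_le_one (sub_nonneg.2 hr.2.le) (sub_le_self 1 hr.1.le) n.le_succ
  exact comb_eq_right_of_lt hq (one_sub_pow_succ_mem_Ioo_zero_one hr n) (by linarith)
    (comb_one_sub_pow_succ_eq_right hr h n)

theorem adh_comb {a b w : X} {p : ℝ} (hp : p ∈ Ioo (0:ℝ) 1) (ha : A.Adh a w) (hb : A.Adh b w) :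
    A.Adh (A.comb p a b) w := by
  intro q hq
  rw [A.assoc q hq p hp, hb _ (assoc_weight_mem_Ioo hq hp), ha _ (mul_mem_Ioo_zero_one hq hp)]

def IsOnePointExtension (A : ConvexAlg X) (E : ConvexAlg (Option X)) : Prop :=
  ∀ p ∈ Ioo (0:ℝ) 1, ∀ x y : X, E.comb p (some x) (some y) = some (A.comb p x y)

namespace IsOnePointExtension

variable {E : ConvexAlg (Option X)}

theorem eq_none_of_comb_eq_none (hE : A.IsOnePointExtension E) {r : ℝ} (hr : r ∈ Ioo (0:ℝ) 1)
    {x : X} {c : Option X} (h : E.comb r (some x) c = none) : c = none := by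
  cases c with
  | none => rfl
  | some v => exact absurd (hE r hr x v ▸ h) (Option.some_ne_none _)

theorem adh_none_of_comb_adh_none (hE : A.IsOnePointExtension E) {p : ℝ}
    (hp : p ∈ Ioo (0:ℝ) 1) {x y : X} (h : E.Adh (some (A.comb p x y)) none) :
    E.Adh (some x) none := by
  have hhalf : (1 / 2 : ℝ) ∈ Ioo (0:ℝ) 1 := by norm_num
  have key := h _ hhalf
  rw [← hE p hp, E.assoc _ hhalf _ hp] at key
  rw [hE.eq_none_of_comb_eq_none (mul_mem_Ioo_zero_one hhalf hp) key] at key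
  exact adh_of_comb_eq_right (mul_mem_Ioo_zero_one hhalf hp) key

end IsOnePointExtension

end ConvexAlg

/-- for a one-point extension `E` of a convex algebra `A`
(the new point being `none : Option X`), the set `Pri = {x | ¬ x ⇝ *}` is a prime
ideal: it is an ideal of `A` whose complement (the set of adherence) is convex. -/
theorem pri_isPrimeIdeal {X : Type*} (A : ConvexAlg X) (E : ConvexAlg (Option X))
    (hcomp : ∀ p ∈ Set.Ioo (0:ℝ) 1, ∀ x y : X,
      E.comb p (some x) (some y) = some (A.comb p x y)) :
    A.IsIdeal {x : X | ¬ E.Adh (some x) none} ∧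
    A.IsConvexSet {x : X | E.Adh (some x) none} := by
  have hE : A.IsOnePointExtension E := hcomp
  constructor
  · intro x hx y p hp hadh
    exact hx (hE.adh_none_of_comb_adh_none hp hadh)
  · intro a ha b hb p hp
    show E.Adh (some (A.comb p a b)) none
    rw [← hcomp p hp]
    exact ConvexAlg.adh_comb hp ha hb
end

section
/- Let D be a cancellative convex algebra, X = Pc(D) the convex algebra of nonempty convex subsets of D with Minkowski operations. If A in X adheres to a singleton {x} (i.e., pA + (1-p){x} = {x} for all p in (0,1)), then A = {x}. -/
namespace ConvexAlg

variable {X : Type*} (A : ConvexAlg X)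

theorem eq_of_comb_eq_right {x s : X} (hx : A.Cancellable x) {p : ℝ} (hp : p ∈ Set.Ioo (0:ℝ) 1)
    (h : A.comb p s x = x) : s = x :=
  hx s x p hp (h.trans (A.idem p hp x).symm)

theorem subset_singleton_of_mink_singleton_eq {x : X} (hx : A.Cancellable x) {p : ℝ}
    (hp : p ∈ Set.Ioo (0:ℝ) 1) {S : Set X} (h : A.mink p S {x} = {x}) : S ⊆ {x} := fun s hs =>
  A.eq_of_comb_eq_right hx hp (h ▸ Set.mem_image2_of_mem hs rfl : A.comb p s x ∈ ({x} : Set X))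

end ConvexAlg

theorem adh_singleton_general {D : Type*} (A : ConvexAlg D)
    (hcanc : ∀ z : D, A.Cancellable z)
    (S : Set D) (hSne : S.Nonempty) (x : D)
    (hadh : ∀ p ∈ Set.Ioo (0:ℝ) 1, A.mink p S {x} = {x}) :
    S = {x} :=
  hSne.subset_singleton_iff.mp <|
    A.subset_singleton_of_mink_singleton_eq (hcanc x) (p := 1/2) (by norm_num) (hadh _ (by norm_num))

/-- over a cancellative convex algebra `D`, if a nonempty convex subset
`S` adheres to a singleton `{x}` in `Pc(D)` (i.e. `p S + (1-p){x} = {x}` for all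
`p ∈ (0,1)`), then `S = {x}`. -/
theorem adh_singleton {D : Type*} (A : ConvexAlg D)
    (hcanc : ∀ z : D, A.Cancellable z)
    (S : Set D) (hSne : S.Nonempty) (hSconv : A.IsConvexSet S) (x : D)
    (hadh : ∀ p ∈ Set.Ioo (0:ℝ) 1, A.mink p S {x} = {x}) :
    S = {x} :=
  adh_singleton_general A hcanc S hSne x hadh
end

section
/- Let V be a real vector space and A a nonempty convex subset such that the difference set A - A is linearly bounded (every convex-algebra homomorphism from (0,∞) into A - A is constant). Then the intersection over p in [0,1) of the sets p{x} + (1-p)A is contained in {x}, for every x in V. In particular, if {x} adheres to A in Pc(V), then A = {x}. -/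
open Pointwise

/-- let `V` be a real vector space and `A` a nonempty convex subset such
that `A - A` is linearly bounded (every convex homomorphism from `(0,∞)` into `A - A`
is constant). Then `⋂_{p ∈ [0,1)} (p{x} + (1-p)A) ⊆ {x}` for every `x ∈ V`; in
particular, if `{x}` adheres to `A` in `Pc(V)`, then `A = {x}`. -/
theorem intersection_lemma {V : Type*} [AddCommGroup V] [Module ℝ V]
    (A : Set V) (hne : A.Nonempty) (hconv : Convex ℝ A)
    (hlb : ∀ φ : ℝ → V, (∀ s : ℝ, 0 < s → φ s ∈ A - A) →
      (∀ p ∈ Set.Ioo (0:ℝ) 1, ∀ s t : ℝ, 0 < s → 0 < t →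
        φ (p*s + (1-p)*t) = p • φ s + (1-p) • φ t) →
      ∀ s t : ℝ, 0 < s → 0 < t → φ s = φ t) :
    ∀ x : V,
      ((⋂ p ∈ Set.Ico (0:ℝ) 1, (fun a => p • x + (1-p) • a) '' A) ⊆ {x}) ∧
      ((∀ p ∈ Set.Ioo (0:ℝ) 1, (fun a => p • x + (1-p) • a) '' A = A) → A = {x}) := by
  intro x
  have part1 : (⋂ p ∈ Set.Ico (0:ℝ) 1, (fun a => p • x + (1-p) • a) '' A) ⊆ {x} := by
    intro y hy
    simp only [Set.mem_iInter] at hy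
    have key : ∀ s : ℝ, 1 ≤ s → x + s • (y - x) ∈ A := by
      intro s hs
      have hs0 : (0:ℝ) < s := by linarith
      have hs0' : s ≠ 0 := ne_of_gt hs0
      have hp : (1 - 1/s) ∈ Set.Ico (0:ℝ) 1 := by
        constructor
        · have h1 : 1/s ≤ 1 := by
            rw [div_le_one hs0]; exact hs
          linarith
        · have h2 : 0 < 1/s := by positivity
          linarith
      obtain ⟨a, ha, hay⟩ := hy (1 - 1/s) hp
      simp only at hay
      -- hay : (1 - 1/s) • x + (1 - (1 - 1/s)) • a = y
      have h3 : (1 - (1 - 1/s)) = 1/s := by ring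
      rw [h3] at hay
      have h4 : s • ((1 - 1/s) • x + (1/s) • a) = s • y := by rw [hay]
      rw [smul_add, smul_smul, smul_smul, mul_sub, mul_one, mul_one_div,
        div_self hs0', one_smul] at h4
      -- h4 : (s - 1) • x + a = s • y
      have : x + s • (y - x) = a := by
        have := h4
        rw [smul_sub]
        have h5 : a = s • y - (s - 1) • x := by
          rw [← h4]; abel
        rw [h5, sub_smul, one_smul]
        abel
      rw [this]; exact ha
    set φ : ℝ → V := fun s => s • (y - x) with hφ
    have hmem : ∀ s : ℝ, 0 < s → φ s ∈ A - A := by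
      intro s hs
      refine ⟨x + (s + 1) • (y - x), key _ (by linarith),
              x + (1:ℝ) • (y - x), key _ le_rfl, ?_⟩
      simp only [hφ, one_smul, add_smul]
      abel
    have haff : ∀ p ∈ Set.Ioo (0:ℝ) 1, ∀ s t : ℝ, 0 < s → 0 < t →
        φ (p*s + (1-p)*t) = p • φ s + (1-p) • φ t := by
      intro p _ s t _ _
      simp only [hφ, add_smul, mul_smul]
    have hconst := hlb φ hmem haff 1 2 one_pos two_pos
    simp only [hφ, one_smul] at hconst
    -- hconst : y - x = (2:ℝ) • (y - x)
    have h0 : ((2:ℝ) - 1) • (y - x) = 0 := by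
      rw [sub_smul, one_smul, ← hconst]; abel
    norm_num at h0
    have : y = x := by
      have := sub_eq_zero.mp h0; exact this
    simp [this]
  refine ⟨part1, ?_⟩
  intro h
  refine Set.eq_singleton_iff_nonempty_unique_mem.mpr ⟨hne, ?_⟩
  intro a ha
  have : a ∈ ⋂ p ∈ Set.Ico (0:ℝ) 1, (fun a => p • x + (1-p) • a) '' A := by
    simp only [Set.mem_iInter]
    intro p hp
    rcases eq_or_lt_of_le hp.1 with h0 | h0
    · refine ⟨a, ha, ?_⟩
      simp [← h0]
    · rw [h p ⟨h0, hp.2⟩]; exact ha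
  exact part1 this
end

section
/- Let C be a compact convex nonempty subset of ℝⁿ. If A, B are nonempty convex subsets of C, p in (0,1), and pA + (1-p)B = C, then A = B = C. -/
/-!
An extreme point `x` of `C` written as `p • a + (1 - p) • b` with `a ∈ A`, `b ∈ B` forces
`a = b = x`, so the extreme points of `C` lie in `A ∩ B`, and then so does their convex hull,
which is `C` by Minkowski's theorem.

Minkowski's theorem goes by induction on the dimension. By Krein–Milman, `C` is the closure of
the convex hull `K` of its extreme points, so an interior point of `C` lies in
`interior (closure K) = interior K`. A boundary point lies in an exposed face, whose extreme
points are extreme in `C` and which sits in a hyperplane; a set with empty interior sits in a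
proper affine subspace. Either way an injective affine map carries the problem to a space of
smaller dimension.
-/

open Set Module

theorem extremePoints_subset_inter_of_image2_eq {𝕜 E : Type*} [Ring 𝕜] [PartialOrder 𝕜]
    [IsOrderedRing 𝕜] [AddCommGroup E] [Module 𝕜 E] {A B C : Set E} {p : 𝕜} (hp : p ∈ Ioo 0 1)
    (hAC : A ⊆ C) (hBC : B ⊆ C) (heq : image2 (fun a b => p • a + (1 - p) • b) A B = C) :
    C.extremePoints 𝕜 ⊆ A ∩ B := by
  intro x hx
  obtain ⟨a, ha, b, hb, rfl⟩ := heq ▸ hx.1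
  obtain ⟨hax, hbx⟩ := mem_extremePoints.1 hx |>.2 a (hAC ha) b (hBC hb)
    ⟨p, 1 - p, hp.1, sub_pos.2 hp.2, add_sub_cancel _ _, rfl⟩
  exact ⟨hax ▸ ha, hbx ▸ hb⟩

theorem image_extremePoints_subset_of_injective {𝕜 E F : Type*} [Ring 𝕜] [PartialOrder 𝕜]
    [IsOrderedRing 𝕜] [AddCommGroup E] [Module 𝕜 E] [AddCommGroup F] [Module 𝕜 F]
    {f : E →ᵃ[𝕜] F} (hf : Function.Injective f) (s : Set E) :
    f '' s.extremePoints 𝕜 ⊆ (f '' s).extremePoints 𝕜 := by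
  rintro _ ⟨x, hx, rfl⟩
  refine ⟨mem_image_of_mem f hx.1, ?_⟩
  rintro _ ⟨a, ha, rfl⟩ _ ⟨b, hb, rfl⟩ hxab
  rw [← image_openSegment, hf.mem_set_image] at hxab
  rw [hx.2 ha hb hxab]

section Minkowski

variable {E : Type*} [NormedAddCommGroup E] [NormedSpace ℝ E]

theorem subset_convexHull_extremePoints_of_sub_mem {s : Set E} {W : Submodule ℝ E} {c : E}
    (hW : ∀ t : Set W, IsCompact t → Convex ℝ t → t ⊆ convexHull ℝ (t.extremePoints ℝ))
    (hs : IsCompact s) (hsc : Convex ℝ s) (hsW : ∀ x ∈ s, x - c ∈ W) :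
    s ⊆ convexHull ℝ (s.extremePoints ℝ) := by
  let φ : W →ᵃ[ℝ] E := (AffineEquiv.constVAdd ℝ E c).toAffineMap.comp W.subtype.toAffineMap
  have hφ : ∀ w, φ w = c + w := fun _ => rfl
  have hrange : s ⊆ range φ := fun x hx => ⟨⟨x - c, hsW x hx⟩, by simp [hφ]⟩
  have hinj : Function.Injective φ := fun v w h => Subtype.ext (by simpa [hφ] using h)
  have hind : Topology.IsInducing φ :=
    (Homeomorph.addLeft c).isInducing.comp Topology.IsInducing.subtypeVal
  have ht := hW (φ ⁻¹' s) (hind.isCompact_preimage' hs hrange) (hsc.affine_preimage φ)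
  rw [← image_preimage_eq_of_subset hrange]
  calc φ '' (φ ⁻¹' s) ⊆ φ '' convexHull ℝ ((φ ⁻¹' s).extremePoints ℝ) := image_mono ht
    _ = convexHull ℝ (φ '' (φ ⁻¹' s).extremePoints ℝ) := φ.image_convexHull _
    _ ⊆ convexHull ℝ ((φ '' (φ ⁻¹' s)).extremePoints ℝ) :=
      convexHull_mono (image_extremePoints_subset_of_injective hinj _)

variable [FiniteDimensional ℝ E]

theorem Convex.interior_closure_subset {K : Set E} (hK : Convex ℝ K) :
    interior (closure K) ⊆ K := by
  intro x hx
  have hspan : affineSpan ℝ K = ⊤ := by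
    refine eq_top_iff.2 (hK.closure.interior_nonempty_iff_affineSpan_eq_top.1 ⟨x, hx⟩ ▸
      affineSpan_le.2 ?_)
    exact closure_minimal (subset_affineSpan ℝ K) (affineSpan ℝ K).closed_of_finiteDimensional
  rw [hK.interior_closure_eq_interior_of_nonempty_interior
    (hK.interior_nonempty_iff_affineSpan_eq_top.2 hspan)] at hx
  exact interior_subset hx

theorem subset_convexHull_extremePoints_of_forall_flat {s : Set E}
    (hflat : ∀ t : Set E, IsCompact t → Convex ℝ t → ∀ (c : E) (W : Submodule ℝ E), W ≠ ⊤ →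
      (∀ y ∈ t, y - c ∈ W) → t ⊆ convexHull ℝ (t.extremePoints ℝ))
    (hs : IsCompact s) (hsc : Convex ℝ s) :
    s ⊆ convexHull ℝ (s.extremePoints ℝ) := by
  intro x hx
  by_cases hint : (interior s).Nonempty
  swap
  · have hspan : affineSpan ℝ s ≠ ⊤ := mt hsc.interior_nonempty_iff_affineSpan_eq_top.2 hint
    refine hflat s hs hsc x (affineSpan ℝ s).direction ?_ (fun y hy => ?_) hx
    · rwa [Ne, AffineSubspace.direction_eq_top_iff_of_nonempty ⟨x, subset_affineSpan ℝ s hx⟩]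
    · exact AffineSubspace.vsub_mem_direction (subset_affineSpan ℝ s hy) (subset_affineSpan ℝ s hx)
  by_cases hxint : x ∈ interior s
  · rw [← closure_convexHull_extremePoints hs hsc] at hxint
    exact (convex_convexHull ℝ _).interior_closure_subset hxint
  obtain ⟨f, hf0, hfx⟩ := geometric_hahn_banach_of_nonempty_interior_point hsc hxint hint
  have hface : IsExposed ℝ s (f.toExposed s) := ContinuousLinearMap.toExposed.isExposed
  have hfaceW : ∀ y ∈ f.toExposed s, y - x ∈ LinearMap.ker (f : E →ₗ[ℝ] ℝ) := fun y hy => by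
    simpa [sub_eq_zero] using le_antisymm (hfx y hy.1) (hy.2 x hx)
  refine convexHull_mono hface.isExtreme.extremePoints_subset_extremePoints
    (hflat _ (hface.isCompact hs) (hface.convex hsc) x _ ?_ hfaceW ⟨hx, hfx⟩)
  rw [Ne, LinearMap.ker_eq_top]
  exact_mod_cast hf0

/-- **Minkowski's theorem**. -/
theorem convexHull_extremePoints {s : Set E} (hs : IsCompact s) (hsc : Convex ℝ s) :
    convexHull ℝ (s.extremePoints ℝ) = s := by
  refine (convexHull_min extremePoints_subset hsc).antisymm ?_
  induction hd : finrank ℝ E using Nat.strong_induction_on generalizing E with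
  | _ d ih =>
    refine subset_convexHull_extremePoints_of_forall_flat (fun t ht htc c W hW htW => ?_) hs hsc
    exact subset_convexHull_extremePoints_of_sub_mem
      (fun u hu huc => ih _ (hd ▸ Submodule.finrank_lt hW) hu huc rfl) ht htc htW

end Minkowski

theorem minkowski_eq_self_general {n : ℕ} (C : Set (EuclideanSpace ℝ (Fin n)))
    (hCcp : IsCompact C) (hCcv : Convex ℝ C)
    (A B : Set (EuclideanSpace ℝ (Fin n)))
    (hAC : A ⊆ C) (hAcv : Convex ℝ A)
    (hBC : B ⊆ C) (hBcv : Convex ℝ B)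
    (p : ℝ) (hp : p ∈ Set.Ioo (0:ℝ) 1)
    (heq : Set.image2 (fun a b => p • a + (1-p) • b) A B = C) :
    A = C ∧ B = C := by
  have hext := extremePoints_subset_inter_of_image2_eq hp hAC hBC heq
  refine ⟨hAC.antisymm ?_, hBC.antisymm ?_⟩ <;> rw [← convexHull_extremePoints hCcp hCcv]
  · exact convexHull_min (hext.trans inter_subset_left) hAcv
  · exact convexHull_min (hext.trans inter_subset_right) hBcv

/-- let `C` be a compact convex nonempty subset of `ℝⁿ`. If `A, B` are
nonempty convex subsets of `C`, `p ∈ (0,1)`, and `pA + (1-p)B = C`, then `A = B = C`. -/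
theorem minkowski_eq_self {n : ℕ} (C : Set (EuclideanSpace ℝ (Fin n)))
    (hCcp : IsCompact C) (hCcv : Convex ℝ C) (hCne : C.Nonempty)
    (A B : Set (EuclideanSpace ℝ (Fin n)))
    (hAC : A ⊆ C) (hAcv : Convex ℝ A) (hAne : A.Nonempty)
    (hBC : B ⊆ C) (hBcv : Convex ℝ B) (hBne : B.Nonempty)
    (p : ℝ) (hp : p ∈ Set.Ioo (0:ℝ) 1)
    (heq : Set.image2 (fun a b => p • a + (1-p) • b) A B = C) :
    A = C ∧ B = C :=
  minkowski_eq_self_general C hCcp hCcv A B hAC hAcv hBC hBcv p hp heq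
end

section
/- Let C be a compact convex nonempty subset of ℝⁿ. If A is a nonempty convex subset of ℝⁿ with pA + (1-p)C = C for all p in (0,1) (A adheres to C in the Minkowski convex algebra), then A = C. -/
/-!
Closedness of `C` gives `A ⊆ C`, since `a` is the limit of `p • a + (1 - p) • c` as `p → 1`;
boundedness gives `C ⊆ closure A`, hence `interior C ⊆ A`. A point `x` of `C` outside the
interior maximises a nonzero functional `f` on `C`, so it lies in the exposed face
`F = {f = f x} ∩ C`. As `F` is extreme, `A ∩ F` adheres to `F`; projecting onto `ker f` is
injective on `F`, so induction on the dimension gives `x ∈ A`.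
-/

open Module Set Filter Topology

def Adheres {E : Type*} [AddCommGroup E] [Module ℝ E] (A C : Set E) : Prop :=
  ∀ p ∈ Ioo (0 : ℝ) 1, image2 (fun a c => p • a + (1 - p) • c) A C = C

namespace Adheres

variable {E F : Type*} [AddCommGroup E] [Module ℝ E] {A C : Set E}

theorem image [AddCommGroup F] [Module ℝ F] (h : Adheres A C) (g : E →ₗ[ℝ] F) :
    Adheres (g '' A) (g '' C) := fun p hp => by
  have hg : g '' image2 (fun a c => p • a + (1 - p) • c) A C =
      image2 (fun a c => p • a + (1 - p) • c) (g '' A) (g '' C) :=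
    image_image2_distrib fun a c => by simp only [map_add, map_smul]
  rw [← hg, h p hp]

theorem inter_of_isExtreme {D : Set E} (h : Adheres A C) (hAC : A ⊆ C) (hD : IsExtreme ℝ C D)
    (hDcv : Convex ℝ D) : Adheres (A ∩ D) D := by
  intro p hp
  refine Subset.antisymm ?_ fun y hy => ?_
  · rintro _ ⟨a, ⟨-, ha⟩, c, hc, rfl⟩
    exact hDcv ha hc hp.1.le (sub_nonneg.2 hp.2.le) (add_sub_cancel _ _)
  · obtain ⟨a, ha, c, hc, rfl⟩ := (h p hp).symm ▸ hD.subset hy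
    have hseg : p • a + (1 - p) • c ∈ openSegment ℝ a c :=
      ⟨p, 1 - p, hp.1, sub_pos.2 hp.2, add_sub_cancel _ _, rfl⟩
    exact ⟨a, ⟨ha, hD.left_mem_of_mem_openSegment (hAC ha) hc hy hseg⟩, c,
      hD.right_mem_of_mem_openSegment (hAC ha) hc hy hseg, rfl⟩

theorem subset [TopologicalSpace E] [IsTopologicalAddGroup E] [ContinuousSMul ℝ E]
    (h : Adheres A C) (hC : IsClosed C) (hne : C.Nonempty) : A ⊆ C := by
  obtain ⟨c, hc⟩ := hne
  intro a ha
  have hlim : Tendsto (fun p : ℝ => p • a + (1 - p) • c) (𝓝[<] 1) (𝓝 a) := by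
    have : Continuous fun p : ℝ => p • a + (1 - p) • c := by fun_prop
    simpa using (this.tendsto 1).mono_left nhdsWithin_le_nhds
  refine hC.mem_of_tendsto hlim ?_
  filter_upwards [Ioo_mem_nhdsLT zero_lt_one] with p hp
  exact h p hp ▸ mem_image2_of_mem ha hc

end Adheres

section Normed

variable {E : Type*} [NormedAddCommGroup E] [NormedSpace ℝ E] {A C : Set E}

theorem Adheres.subset_closure (h : Adheres A C) (hAC : A ⊆ C) (hC : Bornology.IsBounded C) :
    C ⊆ closure A := by
  intro x hx
  rw [Metric.mem_closure_iff]
  intro ε hε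
  have hsmall : ∀ᶠ t in 𝓝[>] (0 : ℝ), t * Metric.diam C < ε := by
    have : Tendsto (fun t : ℝ => t * Metric.diam C) (𝓝[>] 0) (𝓝 0) := by
      simpa using ((continuous_mul_const (Metric.diam C)).tendsto 0).mono_left nhdsWithin_le_nhds
    exact this (gt_mem_nhds hε)
  obtain ⟨t, ht, htε⟩ := (hsmall.and (Ioo_mem_nhdsGT zero_lt_one)).exists
  have hp : 1 - t ∈ Ioo (0 : ℝ) 1 := ⟨sub_pos.2 htε.2, sub_lt_self _ htε.1⟩
  obtain ⟨a, ha, c, hc, rfl⟩ := (h (1 - t) hp).symm ▸ hx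
  refine ⟨a, ha, ?_⟩
  calc dist ((1 - t) • a + (1 - (1 - t)) • c) a = t * dist c a := by
        rw [dist_eq_norm, dist_eq_norm, ← norm_smul_of_nonneg htε.1.le]
        congr 1
        module
    _ ≤ t * Metric.diam C :=
        mul_le_mul_of_nonneg_left (Metric.dist_le_diam_of_mem hC hc (hAC ha)) htε.1.le
    _ < ε := ht

variable [FiniteDimensional ℝ E]

theorem Convex.interior_subset_of_subset_closure (hA : Convex ℝ A) (h : C ⊆ closure A) :
    interior C ⊆ A := by
  intro x hx
  have hx' : x ∈ interior (closure A) := interior_mono h hx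
  have hA' : (interior A).Nonempty := by
    have hspan := hA.closure.interior_nonempty_iff_affineSpan_eq_top.1 ⟨x, hx'⟩
    refine hA.interior_nonempty_iff_affineSpan_eq_top.2 (eq_top_iff.2 ?_)
    exact hspan ▸ affineSpan_le.2 (closure_minimal (subset_affineSpan ℝ A)
      (affineSpan ℝ A).closed_of_finiteDimensional)
  exact interior_subset (hA.interior_closure_eq_interior_of_nonempty_interior hA' ▸ hx')

theorem Convex.exists_forall_le_of_notMem_interior {x : E} (hC : Convex ℝ C) (hx : x ∈ C)
    (hxC : x ∉ interior C) : ∃ f : StrongDual ℝ E, f ≠ 0 ∧ ∀ y ∈ C, f y ≤ f x := by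
  by_cases hint : (interior C).Nonempty
  · exact geometric_hahn_banach_of_nonempty_interior_point hC hxC hint
  have hspan : vectorSpan ℝ C < ⊤ := by
    rw [lt_top_iff_ne_top, Ne, ← direction_affineSpan,
      AffineSubspace.direction_eq_top_iff_of_nonempty ⟨x, subset_affineSpan ℝ C hx⟩,
      ← hC.interior_nonempty_iff_affineSpan_eq_top]
    exact hint
  obtain ⟨f, hf0, hker⟩ := (vectorSpan ℝ C).exists_le_ker_of_lt_top hspan
  refine ⟨LinearMap.toContinuousLinearMap f, by simpa using hf0, fun y hy => ?_⟩
  have hfy := LinearMap.mem_ker.1 (hker (vsub_mem_vectorSpan ℝ hy hx))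
  rw [vsub_eq_sub, map_sub, sub_eq_zero] at hfy
  exact hfy.le

end Normed

theorem Submodule.injOn_projectionOnto {R E : Type*} [Ring R] [AddCommGroup E] [Module R E]
    {p q : Submodule R E} (h : IsCompl p q) {s : Set E}
    (hs : ∀ y ∈ s, ∀ z ∈ s, y - z ∈ p) : InjOn (p.projectionOnto q h) s := by
  intro y hy z hz hyz
  have := projectionOnto_apply_of_mem_left h (hs y hy z hz)
  rw [map_sub, hyz, sub_self] at this
  exact sub_eq_zero.1 (congrArg Subtype.val this).symm

theorem Adheres.superset {E : Type*} [NormedAddCommGroup E] [NormedSpace ℝ E]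
    [FiniteDimensional ℝ E] {A C : Set E} (h : Adheres A C) (hAC : A ⊆ C) (hC : IsCompact C)
    (hCcv : Convex ℝ C) (hA : Convex ℝ A) : C ⊆ A := by
  induction hn : finrank ℝ E using Nat.strong_induction_on generalizing E with
  | _ n ih =>
    intro x hx
    by_cases hxC : x ∈ interior C
    · exact hA.interior_subset_of_subset_closure (h.subset_closure hAC hC.isBounded) hxC
    obtain ⟨f, hf0, hfx⟩ := hCcv.exists_forall_le_of_notMem_interior hx hxC
    set F := f.toExposed C
    have hF : IsExposed ℝ C F := ContinuousLinearMap.toExposed.isExposed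
    have hxF : x ∈ F := ⟨hx, hfx⟩
    have hFcv : Convex ℝ F := hF.convex hCcv
    have hFx : ∀ y ∈ F, f y = f x := fun y hy => le_antisymm (hfx y hy.1) (hy.2 x hx)
    set S := LinearMap.ker (f : E →ₗ[ℝ] ℝ)
    have hS : finrank ℝ S < n := hn ▸ Submodule.finrank_lt (by
      rwa [Ne, LinearMap.ker_eq_top, ← ContinuousLinearMap.toLinearMap_zero,
        ContinuousLinearMap.coe_inj])
    obtain ⟨T, hST⟩ := S.exists_isCompl
    set g := S.projectionOnto T hST
    have hgF : InjOn g F := Submodule.injOn_projectionOnto hST fun y hy z hz => by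
      simp [S, hFx y hy, hFx z hz]
    have hgF' : g '' F ⊆ g '' (A ∩ F) :=
      ih _ hS ((h.inter_of_isExtreme hAC hF.isExtreme hFcv).image g)
        (image_mono inter_subset_right) ((hF.isCompact hC).image g.continuous_of_finiteDimensional)
        (hFcv.linear_image g) ((hA.inter hFcv).linear_image g) rfl
    obtain ⟨a, ⟨ha, haF⟩, hax⟩ := hgF' (mem_image_of_mem g hxF)
    exact hgF haF hxF hax ▸ ha

theorem adh_compact_eq_general {n : ℕ} (C : Set (EuclideanSpace ℝ (Fin n)))
    (hCcp : IsCompact C) (hCcv : Convex ℝ C) (hCne : C.Nonempty)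
    (A : Set (EuclideanSpace ℝ (Fin n))) (hAcv : Convex ℝ A)
    (hadh : ∀ p ∈ Set.Ioo (0:ℝ) 1,
      Set.image2 (fun a c => p • a + (1-p) • c) A C = C) :
    A = C := by
  have hAC : A ⊆ C := Adheres.subset hadh hCcp.isClosed hCne
  exact hAC.antisymm (Adheres.superset hadh hAC hCcp hCcv hAcv)

/-- let `C` be a compact convex nonempty subset of `ℝⁿ`. If `A` is a
nonempty convex subset of `ℝⁿ` with `pA + (1-p)C = C` for all `p ∈ (0,1)` (i.e. `A`
adheres to `C` in the Minkowski convex algebra), then `A = C`. -/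
theorem adh_compact_eq {n : ℕ} (C : Set (EuclideanSpace ℝ (Fin n)))
    (hCcp : IsCompact C) (hCcv : Convex ℝ C) (hCne : C.Nonempty)
    (A : Set (EuclideanSpace ℝ (Fin n))) (hAcv : Convex ℝ A) (hAne : A.Nonempty)
    (hadh : ∀ p ∈ Set.Ioo (0:ℝ) 1,
      Set.image2 (fun a c => p • a + (1-p) • c) A C = C) :
    A = C :=
  adh_compact_eq_general C hCcp hCcv hCne A hAcv hadh
end

section
/- Let D be a compact convex nonempty subset of ℝⁿ and C a compact convex nonempty subset of D. Then C is an extremal point of the convex algebra K(D) of compact convex nonempty subsets of D (with Minkowski operations) if and only if C is an extremal point of the larger convex algebra Pc(D) of all nonempty convex subsets of D. -/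
open Set Module Topology
open scoped RealInnerProductSpace

/-! Taking closures, an extremal point `C` of `K(D)` can only be written as `p • A + (1 - p) • B`
with `closure A = closure B = C`, so `A, B ⊆ C`. Then every extreme point `e` of `C` lies in `A`:
writing `e = p • a + (1 - p) • b` with `a, b ∈ C` forces `a = e`. By Minkowski's theorem `C` is
the convex hull of its extreme points, so the convex set `A` contains `C`; symmetrically for `B`.
Minkowski's theorem is proved by induction on the dimension of `C`: push a point of `C` away from
an extreme point until it reaches the relative boundary, where it lies in a proper exposed face. -/

theorem image2_closure_eq_of_isClosed {α β γ : Type*} [TopologicalSpace α] [TopologicalSpace β]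
    [TopologicalSpace γ] {f : α → β → γ} (hf : Continuous (Function.uncurry f))
    {A : Set α} {B : Set β} {C : Set γ} (hC : IsClosed C) (h : image2 f A B = C) :
    image2 f (closure A) (closure B) = C := by
  refine (image2_subset_iff.2 fun a ha b hb => ?_).antisymm
    (h ▸ image2_subset subset_closure subset_closure)
  exact hC.closure_eq ▸ map_mem_closure₂ hf ha hb fun a ha b hb => h ▸ mem_image2_of_mem ha hb

section Module

variable {E : Type*} [AddCommGroup E] [Module ℝ E]

theorem extremePoints_subset_of_image2_eq {A B C : Set E} (hAC : A ⊆ C) (hBC : B ⊆ C) {p : ℝ}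
    (hp : p ∈ Ioo 0 1) (h : image2 (fun a b => p • a + (1 - p) • b) A B = C) :
    C.extremePoints ℝ ⊆ A := by
  intro e he
  obtain ⟨a, ha, b, hb, rfl⟩ := h.symm.subset he.1
  have hseg : p • a + (1 - p) • b ∈ openSegment ℝ a b :=
    ⟨p, 1 - p, hp.1, sub_pos.2 hp.2, add_sub_cancel p 1, rfl⟩
  exact he.2 (hAC ha) (hBC hb) hseg ▸ ha

theorem image2_convexCombination_comm {A B : Set E} (p : ℝ) :
    image2 (fun b a => (1 - p) • b + (1 - (1 - p)) • a) B A =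
      image2 (fun a b => p • a + (1 - p) • b) A B := by
  rw [image2_swap]
  exact image2_congr fun a _ b _ => by rw [sub_sub_cancel, add_comm]

theorem vectorSpan_setOf_add_mem_eq_top {C : Set E} {z : E} (hz : z ∈ C) :
    vectorSpan ℝ {y : vectorSpan ℝ C | z + (y : E) ∈ C} = ⊤ := by
  refine Submodule.eq_top_iff'.2 fun ⟨y, hy⟩ => ?_
  induction hy using Submodule.span_induction with
  | mem y hy =>
    obtain ⟨x₁, hx₁, x₂, hx₂, rfl⟩ := hy
    have h₁ : x₁ - z ∈ vectorSpan ℝ C := vsub_mem_vectorSpan ℝ hx₁ hz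
    have h₂ : x₂ - z ∈ vectorSpan ℝ C := vsub_mem_vectorSpan ℝ hx₂ hz
    have := vsub_mem_vectorSpan ℝ (s := {y : vectorSpan ℝ C | z + (y : E) ∈ C})
      (p₁ := ⟨x₁ - z, h₁⟩) (p₂ := ⟨x₂ - z, h₂⟩) (by simpa using hx₁) (by simpa using hx₂)
    convert this using 1
    ext
    simp
  | zero => exact Submodule.zero_mem _
  | add y₁ y₂ _ _ ih₁ ih₂ => exact Submodule.add_mem _ ih₁ ih₂
  | smul r y _ ih => exact Submodule.smul_mem _ r ih

theorem add_mem_segment_add_smul {e v : E} {T : ℝ} (hT : 1 ≤ T) :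
    e + v ∈ segment ℝ e (e + T • v) := by
  have hT0 : T ≠ 0 := by positivity
  refine ⟨1 - T⁻¹, T⁻¹, sub_nonneg.2 (inv_le_one_of_one_le₀ hT), by positivity, by ring, ?_⟩
  rw [smul_add, smul_smul, inv_mul_cancel₀ hT0]
  module

end Module

section Normed

variable {E : Type*} [NormedAddCommGroup E] [NormedSpace ℝ E]

theorem IsCompact.isCompact_setOf_add_smul_mem {C : Set E} (hC : IsCompact C) (a : E) {v : E}
    (hv : v ≠ 0) : IsCompact {t : ℝ | a + t • v ∈ C} :=
  (isClosedEmbedding_smul_left hv).isCompact_preimage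
    ((Homeomorph.addLeft a).isCompact_preimage.2 hC)

theorem finrank_vectorSpan_toExposed_lt [FiniteDimensional ℝ E] {l : StrongDual ℝ E}
    {C : Set E} {w : E} (hw : w ∈ vectorSpan ℝ C) (hlw : l w ≠ 0) :
    finrank ℝ (vectorSpan ℝ (l.toExposed C)) < finrank ℝ (vectorSpan ℝ C) := by
  refine Submodule.finrank_lt_finrank_of_lt ((vectorSpan_mono ℝ fun x hx => hx.1).lt_of_ne ?_)
  intro h
  have hker : vectorSpan ℝ (l.toExposed C) ≤ LinearMap.ker (l : E →ₗ[ℝ] ℝ) := by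
    refine Submodule.span_le.2 ?_
    rintro _ ⟨x, hx, y, hy, rfl⟩
    simp only [SetLike.mem_coe, LinearMap.mem_ker, vsub_eq_sub, map_sub]
    exact sub_eq_zero.2 ((hy.2 x hx.1).antisymm (hx.2 y hy.1))
  exact hlw (hker (h ▸ hw))

end Normed

section InnerProduct

variable {E : Type*} [NormedAddCommGroup E] [InnerProductSpace ℝ E] [FiniteDimensional ℝ E]

theorem Convex.exists_inner_le_of_forall_add_smul_notMem {C : Set E} (hC : Convex ℝ C) {z v : E}
    (hz : z ∈ C) (hv : v ∈ vectorSpan ℝ C) (hout : ∀ δ : ℝ, 0 < δ → z + δ • v ∉ C) :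
    ∃ u ∈ vectorSpan ℝ C, u ≠ 0 ∧ ∀ x ∈ C, ⟪u, x⟫ ≤ ⟪u, z⟫ := by
  -- `z` is a relative boundary point: in `V`, the translate `C - z` has interior avoiding `0`.
  set V := vectorSpan ℝ C
  set C' : Set V := {y | z + (y : E) ∈ C}
  have hC' : Convex ℝ C' := hC.affine_preimage ((AffineMap.const ℝ V z) + V.subtype.toAffineMap)
  have hC'ne : C'.Nonempty := ⟨0, by simpa [C'] using hz⟩
  have hint : (interior C').Nonempty := by
    rw [hC'.interior_nonempty_iff_affineSpan_eq_top,
      AffineSubspace.affineSpan_eq_top_iff_vectorSpan_eq_top_of_nonempty ℝ V V hC'ne]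
    exact vectorSpan_setOf_add_mem_eq_top hz
  have h0 : (0 : V) ∉ interior C' := by
    intro h
    have hnhds : ∀ᶠ δ in 𝓝 (0 : ℝ), δ • (⟨v, hv⟩ : V) ∈ C' :=
      (continuous_id.smul continuous_const).continuousAt.preimage_mem_nhds
        (by simpa using mem_interior_iff_mem_nhds.1 h)
    obtain ⟨δ, hδ, hδpos⟩ :=
      ((hnhds.filter_mono nhdsWithin_le_nhds).and (self_mem_nhdsWithin (s := Ioi 0))).exists
    exact hout δ hδpos hδ
  obtain ⟨f, hf⟩ := geometric_hahn_banach_open_point hC'.interior isOpen_interior h0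
  have hfle : ∀ y ∈ C', f y ≤ 0 := by
    have : closure (interior C') ⊆ {y | f y ≤ 0} :=
      closure_minimal (fun y hy => by simpa using (hf y hy).le)
        (isClosed_le f.continuous continuous_const)
    rw [hC'.closure_interior_eq_closure_of_nonempty_interior hint] at this
    exact fun y hy => this (subset_closure hy)
  have hf0 : f ≠ 0 := by
    rintro rfl
    obtain ⟨y, hy⟩ := hint
    simpa using hf y hy
  set u : V := (InnerProductSpace.toDual ℝ V).symm f
  refine ⟨u, u.2, by simpa [u] using hf0, fun x hx => ?_⟩
  have hxz : x - z ∈ V := vsub_mem_vectorSpan ℝ hx hz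
  have hux : ⟪(u : E), x - z⟫ = f ⟨x - z, hxz⟩ :=
    InnerProductSpace.toDual_symm_apply (x := (⟨x - z, hxz⟩ : V))
  have := hfle ⟨x - z, hxz⟩ (by simpa [C'] using hx)
  rw [inner_sub_right] at hux
  linarith

theorem IsCompact.subset_convexHull_extremePoints {C : Set E} (hC : IsCompact C)
    (hCcv : Convex ℝ C) : C ⊆ convexHull ℝ (C.extremePoints ℝ) := by
  induction hd : finrank ℝ (vectorSpan ℝ C) using Nat.strong_induction_on generalizing C with
  | _ d IH =>
  intro c hc
  obtain ⟨e, he⟩ := hC.extremePoints_nonempty ⟨c, hc⟩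
  obtain rfl | hce := eq_or_ne c e
  · exact subset_convexHull ℝ _ he
  set v := c - e
  have hv : v ∈ vectorSpan ℝ C := vsub_mem_vectorSpan ℝ hc he.1
  have hc' : e + (1 : ℝ) • v ∈ C := by simpa [v] using hc
  obtain ⟨T, hzC, hTmax⟩ :=
    (hC.isCompact_setOf_add_smul_mem e (sub_ne_zero.2 hce)).exists_isGreatest ⟨1, hc'⟩
  set z := e + T • v
  have hout : ∀ δ : ℝ, 0 < δ → z + δ • v ∉ C := fun δ hδ hzδ => by
    have := hTmax (show e + (T + δ) • v ∈ C by rwa [add_smul, ← add_assoc])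
    linarith
  obtain ⟨u, huV, hu0, hsupp⟩ := hCcv.exists_inner_le_of_forall_add_smul_notMem hzC hv hout
  set F := (innerSL ℝ u).toExposed C
  have hF : IsExposed ℝ C F := ContinuousLinearMap.toExposed.isExposed
  have hzF : z ∈ F := ⟨hzC, hsupp⟩
  have hdim : finrank ℝ (vectorSpan ℝ F) < d :=
    hd ▸ finrank_vectorSpan_toExposed_lt huV (by simpa using hu0)
  have hz : z ∈ convexHull ℝ (C.extremePoints ℝ) :=
    convexHull_mono hF.isExtreme.extremePoints_subset_extremePoints
      (IH _ hdim (hF.isCompact hC) (hF.convex hCcv) rfl hzF)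
  have hcz : c ∈ segment ℝ e z := by
    simpa [v] using add_mem_segment_add_smul (e := e) (v := v) (hTmax hc')
  exact (convex_convexHull ℝ _).segment_subset (subset_convexHull ℝ _ he) hz hcz

theorem eq_of_image2_eq {A B C : Set E} (hC : IsCompact C) (hCcv : Convex ℝ C) (hAC : A ⊆ C)
    (hAcv : Convex ℝ A) (hBC : B ⊆ C) {p : ℝ} (hp : p ∈ Ioo 0 1)
    (h : image2 (fun a b => p • a + (1 - p) • b) A B = C) : A = C :=
  hAC.antisymm <| (hC.subset_convexHull_extremePoints hCcv).trans <|
    convexHull_min (extremePoints_subset_of_image2_eq hAC hBC hp h) hAcv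

end InnerProduct

theorem extremal_K_iff_extremal_Pc_general {n : ℕ} (D : Set (EuclideanSpace ℝ (Fin n)))
    (hDcp : IsCompact D)
    (C : Set (EuclideanSpace ℝ (Fin n)))
    (hCcp : IsCompact C) (hCcv : Convex ℝ C) :
    (∀ A B : Set (EuclideanSpace ℝ (Fin n)),
        A ⊆ D → IsCompact A → Convex ℝ A → A.Nonempty →
        B ⊆ D → IsCompact B → Convex ℝ B → B.Nonempty →
        ∀ p ∈ Set.Ioo (0:ℝ) 1,
          Set.image2 (fun a b => p • a + (1-p) • b) A B = C → A = C ∧ B = C)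
    ↔
    (∀ A B : Set (EuclideanSpace ℝ (Fin n)),
        A ⊆ D → Convex ℝ A → A.Nonempty →
        B ⊆ D → Convex ℝ B → B.Nonempty →
        ∀ p ∈ Set.Ioo (0:ℝ) 1,
          Set.image2 (fun a b => p • a + (1-p) • b) A B = C → A = C ∧ B = C) := by
  refine ⟨fun hK A B hAD hAcv hAne hBD hBcv hBne p hp h => ?_,
    fun hPc A B hAD _ hAcv hAne hBD _ hBcv hBne => hPc A B hAD hAcv hAne hBD hBcv hBne⟩
  obtain ⟨hA, hB⟩ := hK (closure A) (closure B)
    (closure_minimal hAD hDcp.isClosed) (hDcp.closure_of_subset hAD) hAcv.closure hAne.closure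
    (closure_minimal hBD hDcp.isClosed) (hDcp.closure_of_subset hBD) hBcv.closure hBne.closure
    p hp (image2_closure_eq_of_isClosed (by fun_prop) hCcp.isClosed h)
  have hAC : A ⊆ C := hA ▸ subset_closure
  have hBC : B ⊆ C := hB ▸ subset_closure
  have hq : 1 - p ∈ Ioo (0 : ℝ) 1 := ⟨sub_pos.2 hp.2, sub_lt_self 1 hp.1⟩
  exact ⟨eq_of_image2_eq hCcp hCcv hAC hAcv hBC hp h,
    eq_of_image2_eq hCcp hCcv hBC hBcv hAC hq ((image2_convexCombination_comm p).trans h)⟩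

/-- for `D` compact convex nonempty in `ℝⁿ` and `C` a compact convex
nonempty subset of `D`, `C` is an extremal point of the convex algebra `K(D)` of
compact convex nonempty subsets of `D` (with Minkowski operations) iff it is an
extremal point of the convex algebra `Pc(D)` of all nonempty convex subsets of `D`. -/
theorem extremal_K_iff_extremal_Pc {n : ℕ} (D : Set (EuclideanSpace ℝ (Fin n)))
    (hDcp : IsCompact D) (hDcv : Convex ℝ D) (hDne : D.Nonempty)
    (C : Set (EuclideanSpace ℝ (Fin n)))
    (hCD : C ⊆ D) (hCcp : IsCompact C) (hCcv : Convex ℝ C) (hCne : C.Nonempty) :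
    (∀ A B : Set (EuclideanSpace ℝ (Fin n)),
        A ⊆ D → IsCompact A → Convex ℝ A → A.Nonempty →
        B ⊆ D → IsCompact B → Convex ℝ B → B.Nonempty →
        ∀ p ∈ Set.Ioo (0:ℝ) 1,
          Set.image2 (fun a b => p • a + (1-p) • b) A B = C → A = C ∧ B = C)
    ↔
    (∀ A B : Set (EuclideanSpace ℝ (Fin n)),
        A ⊆ D → Convex ℝ A → A.Nonempty →
        B ⊆ D → Convex ℝ B → B.Nonempty →
        ∀ p ∈ Set.Ioo (0:ℝ) 1,
          Set.image2 (fun a b => p • a + (1-p) • b) A B = C → A = C ∧ B = C) :=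
  extremal_K_iff_extremal_Pc_general D hDcp C hCcp hCcv
end

section
/- Let Δⁿ be the standard n-simplex in ℝⁿ (convex hull of the canonical basis vectors e₁,…,eₙ). The set L(Δⁿ) = {A compact convex nonempty subset of Δⁿ : min of the i-th coordinate over A equals 0 for each i = 1,…,n} contains no singletons, is convex, and is an extremal subset of the convex algebra K(Δⁿ) of compact convex nonempty subsets of Δⁿ with Minkowski operations. -/
/-- The compact convex nonempty subsets of the standard simplex. -/
def KSimplex (n : ℕ) : Set (Set (Fin n → ℝ)) :=
  {A | A ⊆ stdSimplex ℝ (Fin n) ∧ IsCompact A ∧ Convex ℝ A ∧ A.Nonempty}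

/-- The members of `K(Δⁿ)` whose minimum in each coordinate is `0`, i.e. touching
every face of the simplex. Since `A ⊆ Δⁿ`, `min πᵢ(A) = 0` means `∃ x ∈ A, x i = 0`. -/
def LSimplex (n : ℕ) : Set (Set (Fin n → ℝ)) :=
  {A | A ∈ KSimplex n ∧ ∀ i : Fin n, ∃ x ∈ A, x i = 0}

/-- `L(Δⁿ)` contains no singletons, is convex, and is an extremal
subset of the convex algebra `K(Δⁿ)` with Minkowski operations. -/
theorem LSimplex_properties (n : ℕ) :
    (∀ A ∈ LSimplex n, ∀ x : Fin n → ℝ, A ≠ {x}) ∧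
    (∀ A ∈ LSimplex n, ∀ B ∈ LSimplex n, ∀ p ∈ Set.Ioo (0:ℝ) 1,
      Set.image2 (fun a b => p • a + (1-p) • b) A B ∈ LSimplex n) ∧
    (∀ A ∈ KSimplex n, ∀ B ∈ KSimplex n, ∀ p ∈ Set.Ioo (0:ℝ) 1,
      Set.image2 (fun a b => p • a + (1-p) • b) A B ∈ LSimplex n →
      A ∈ LSimplex n ∧ B ∈ LSimplex n) := by
  refine ⟨?_, ?_, ?_⟩
  · -- no singletons
    rintro A ⟨⟨hsub, _, _, _⟩, hmin⟩ x rfl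
    have hx : x ∈ stdSimplex ℝ (Fin n) := hsub rfl
    have hzero : ∀ i, x i = 0 := by
      intro i
      obtain ⟨y, hy, hyi⟩ := hmin i
      rw [Set.mem_singleton_iff] at hy
      rw [← hy]; exact hyi
    have h1 : ∑ i, x i = 1 := hx.2
    rw [Finset.sum_congr rfl (fun i _ => hzero i)] at h1
    simp at h1
  · -- convexity
    rintro A ⟨⟨hAs, hAc, hAv, hAne⟩, hAmin⟩ B ⟨⟨hBs, hBc, hBv, hBne⟩, hBmin⟩ p ⟨hp0, hp1⟩
    have hq0 : (0:ℝ) ≤ 1 - p := by linarith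
    refine ⟨⟨?_, ?_, ?_, ?_⟩, ?_⟩
    · rintro c ⟨a, ha, b, hb, rfl⟩
      exact (convex_stdSimplex ℝ (Fin n)) (hAs ha) (hBs hb) hp0.le hq0 (by ring)
    · have : Set.image2 (fun a b => p • a + (1-p) • b) A B
          = (fun q : (Fin n → ℝ) × (Fin n → ℝ) => p • q.1 + (1-p) • q.2) '' (A ×ˢ B) := by
        exact (Set.image_prod _).symm
      rw [this]
      exact (hAc.prod hBc).image (by fun_prop)
    · rintro c ⟨a1, ha1, b1, hb1, rfl⟩ d ⟨a2, ha2, b2, hb2, rfl⟩ s t hs ht hst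
      refine ⟨s • a1 + t • a2, hAv ha1 ha2 hs ht hst,
              s • b1 + t • b2, hBv hb1 hb2 hs ht hst, ?_⟩
      module
    · obtain ⟨a, ha⟩ := hAne
      obtain ⟨b, hb⟩ := hBne
      exact ⟨_, Set.mem_image2_of_mem ha hb⟩
    · intro i
      obtain ⟨a, ha, hai⟩ := hAmin i
      obtain ⟨b, hb, hbi⟩ := hBmin i
      refine ⟨_, Set.mem_image2_of_mem ha hb, ?_⟩
      simp [hai, hbi]
  · -- extremality
    rintro A hA B hB p ⟨hp0, hp1⟩ ⟨_, hmin⟩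
    have hq0 : (0:ℝ) < 1 - p := by linarith
    have key : ∀ i : Fin n, (∃ a ∈ A, a i = 0) ∧ (∃ b ∈ B, b i = 0) := by
      intro i
      obtain ⟨c, hc, hci⟩ := hmin i
      obtain ⟨a, ha, b, hb, rfl⟩ := hc
      have hai : 0 ≤ a i := (hA.1 ha).1 i
      have hbi : 0 ≤ b i := (hB.1 hb).1 i
      simp only [Pi.add_apply, Pi.smul_apply, smul_eq_mul] at hci
      have ha0 : a i = 0 := by nlinarith
      have hb0 : b i = 0 := by nlinarith
      exact ⟨⟨a, ha, ha0⟩, ⟨b, hb, hb0⟩⟩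
    exact ⟨⟨hA, fun i => (key i).1⟩, ⟨hB, fun i => (key i).2⟩⟩
end
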